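/- arXiv:1909.07880 — 2 statements merged into one kernel-verified Lean document; each statement's English description precedes it below -/
import Mathlib

section
/- For ρ > 0, γ > 0 and α ∈ ℝ with γ + α < 1, the right-sided Katugampola fractional integral of (τ^ρ/ρ)^{α-1} satisfies (ρ^{1-γ}/Γ(γ)) ∫_s^∞ τ^{ρ-1} (τ^ρ/ρ)^{α-1} (τ^ρ - s^ρ)^{γ-1} dτ = (Γ(1-γ-α)/Γ(1-α)) · (s^ρ/ρ)^{α+γ-1} for all s > 0. -/
open Real MeasureTheory

lemma real_beta_aux (a b : ℝ) (ha : 0 < a) (hb : 0 < b) :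
    ∫ x in Set.Ioo (0:ℝ) 1, x ^ (a - 1) * (1 - x) ^ (b - 1) =
      Real.Gamma a * Real.Gamma b / Real.Gamma (a + b) := by
  have key : ((∫ x in (0:ℝ)..1, x ^ (a - 1) * (1 - x) ^ (b - 1) : ℝ) : ℂ)
      = Complex.betaIntegral a b := by
    rw [← intervalIntegral.integral_ofReal]
    unfold Complex.betaIntegral
    apply intervalIntegral.integral_congr
    intro x hx
    rw [Set.uIcc_of_le (by norm_num : (0:ℝ) ≤ 1)] at hx
    obtain ⟨hx0, hx1⟩ := hx
    push_cast
    rw [Complex.ofReal_cpow hx0, Complex.ofReal_cpow (by linarith : (0:ℝ) ≤ 1 - x)]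
    push_cast
    ring
  have hab : (0:ℝ) < a + b := by linarith
  have hG : Complex.Gamma (a + b) ≠ 0 := by
    apply Complex.Gamma_ne_zero
    intro m hm
    rw [← Complex.ofReal_add, ← Complex.ofReal_natCast, ← Complex.ofReal_neg,
      Complex.ofReal_inj] at hm
    nlinarith [Nat.cast_nonneg (α := ℝ) m]
  have hbeta : Complex.betaIntegral a b =
      Complex.Gamma a * Complex.Gamma b / Complex.Gamma (a + b) := by
    rw [eq_div_iff hG, mul_comm]
    rw [← Complex.Gamma_mul_Gamma_eq_betaIntegral] <;> simp [ha, hb]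
  rw [hbeta, ← Complex.ofReal_add, Complex.Gamma_ofReal, Complex.Gamma_ofReal,
    Complex.Gamma_ofReal, ← Complex.ofReal_mul, ← Complex.ofReal_div,
    Complex.ofReal_inj] at key
  rw [← key, intervalIntegral.integral_of_le (by norm_num : (0:ℝ) ≤ 1),
    MeasureTheory.integral_Ioc_eq_integral_Ioo]

lemma comp_eq_aux (ρ γ α s t : ℝ) (hρ : 0 < ρ) (hs : 0 < s) (ht0 : 0 < t) (ht1 : t < 1) :
    |s * ((-1/ρ) * t ^ (-1/ρ - 1))| *
      ((s * t ^ (-1/ρ)) ^ (ρ - 1) * ((s * t ^ (-1/ρ)) ^ ρ / ρ) ^ (α - 1) *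
        ((s * t ^ (-1/ρ)) ^ ρ - s ^ ρ) ^ (γ - 1)) =
    ((s ^ ρ / ρ) ^ (α + γ - 1) * ρ ^ (γ - 1)) * (t ^ ((1 - α - γ) - 1) * (1 - t) ^ (γ - 1)) := by
  have h1t : 0 < 1 - t := by linarith
  have htp : 0 < t ^ (-1/ρ - 1) := rpow_pos_of_pos ht0 _
  have htp2 : 0 < t ^ (-1/ρ) := rpow_pos_of_pos ht0 _
  have hsp : 0 < s ^ ρ := rpow_pos_of_pos hs _
  have e1 : (s * t ^ (-1/ρ)) ^ ρ = s ^ ρ * t⁻¹ := by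
    rw [mul_rpow hs.le htp2.le, ← Real.rpow_mul ht0.le]
    congr 1
    rw [show (-1/ρ) * ρ = -1 by field_simp, Real.rpow_neg_one]
  have eabs : |s * ((-1/ρ) * t ^ (-1/ρ - 1))| = s / ρ * t ^ (-1/ρ - 1) := by
    rw [abs_mul, abs_mul, abs_of_pos hs, abs_of_pos htp, abs_div, abs_neg, abs_one,
      abs_of_pos hρ]
    ring
  have e2 : s ^ ρ * t⁻¹ - s ^ ρ = s ^ ρ * (1 - t) * t⁻¹ := by
    field_simp
  rw [eabs, e1, e2]
  have hbase1 : 0 < s * t ^ (-1/ρ) := mul_pos hs htp2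
  have hbase2 : 0 < s ^ ρ * t⁻¹ / ρ := div_pos (mul_pos hsp (inv_pos.2 ht0)) hρ
  have hbase3 : 0 < s ^ ρ * (1 - t) * t⁻¹ := mul_pos (mul_pos hsp h1t) (inv_pos.2 ht0)
  have hsr : 0 < s ^ ρ / ρ := div_pos hsp hρ
  have hP : 0 < s / ρ * t ^ (-1/ρ - 1) *
      ((s * t ^ (-1/ρ)) ^ (ρ - 1) * (s ^ ρ * t⁻¹ / ρ) ^ (α - 1) *
        (s ^ ρ * (1 - t) * t⁻¹) ^ (γ - 1)) := by positivity
  have hQ : 0 < ((s ^ ρ / ρ) ^ (α + γ - 1) * ρ ^ (γ - 1)) *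
      (t ^ ((1 - α - γ) - 1) * (1 - t) ^ (γ - 1)) := by positivity
  rw [← Real.log_injOn_pos.eq_iff (Set.mem_Ioi.2 hP) (Set.mem_Ioi.2 hQ)]
  simp (disch := positivity) only [Real.log_mul, Real.log_div, Real.log_rpow, Real.log_inv]
  field_simp
  ring

theorem katugampola_integral_scaled_power_right
    (ρ γ α s : ℝ) (hρ : 0 < ρ) (hγ : 0 < γ) (h : γ + α < 1) (hs : 0 < s) :
    (ρ ^ (1 - γ) / Real.Gamma γ) *
      ∫ τ in Set.Ioi s, τ ^ (ρ - 1) * (τ ^ ρ / ρ) ^ (α - 1) * (τ ^ ρ - s ^ ρ) ^ (γ - 1) =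
    (Real.Gamma (1 - γ - α) / Real.Gamma (1 - α)) * (s ^ ρ / ρ) ^ (α + γ - 1) := by
  set f : ℝ → ℝ := fun t => s * t ^ (-1/ρ) with hf
  have hne : (-1/ρ : ℝ) ≠ 0 := (div_neg_of_neg_of_pos (by norm_num) hρ).ne
  have himg : f '' Set.Ioo 0 1 = Set.Ioi s := by
    ext y
    constructor
    · rintro ⟨t, ⟨ht0, ht1⟩, rfl⟩
      have h1 : 1 < t ^ (-1/ρ) :=
        (Real.one_lt_rpow_iff_of_pos ht0).2 (Or.inr ⟨ht1, by
          exact div_neg_of_neg_of_pos (by norm_num) hρ⟩)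
      exact Set.mem_Ioi.2 (lt_mul_of_one_lt_right hs h1)
    · intro hy
      have hy0 : 0 < y := lt_trans hs hy
      have hdy : 0 < s / y := div_pos hs hy0
      refine ⟨(s/y) ^ ρ, ⟨rpow_pos_of_pos hdy ρ,
        Real.rpow_lt_one hdy.le ((div_lt_one hy0).2 hy) hρ⟩, ?_⟩
      show s * ((s/y) ^ ρ) ^ (-1/ρ) = y
      rw [← Real.rpow_mul hdy.le, show ρ * (-1/ρ) = -1 by field_simp, Real.rpow_neg_one]
      field_simp
  have hderiv : ∀ t ∈ Set.Ioo (0:ℝ) 1,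
      HasDerivWithinAt f (s * ((-1/ρ) * t ^ (-1/ρ - 1))) (Set.Ioo 0 1) t := by
    intro t ht
    exact (((Real.hasDerivAt_rpow_const (p := -1/ρ) (Or.inl ht.1.ne')).const_mul
      s).hasDerivWithinAt)
  have hinj : Set.InjOn f (Set.Ioo 0 1) := by
    intro a ha b hb hab
    have : a ^ (-1/ρ) = b ^ (-1/ρ) := mul_left_cancel₀ hs.ne' hab
    exact Real.rpow_left_injOn hne ha.1.le hb.1.le this
  have hsub : ∫ τ in Set.Ioi s, τ ^ (ρ - 1) * (τ ^ ρ / ρ) ^ (α - 1) * (τ ^ ρ - s ^ ρ) ^ (γ - 1)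
      = ∫ t in Set.Ioo (0:ℝ) 1,
          ((s ^ ρ / ρ) ^ (α + γ - 1) * ρ ^ (γ - 1)) *
            (t ^ ((1 - α - γ) - 1) * (1 - t) ^ (γ - 1)) := by
    rw [← himg, integral_image_eq_integral_abs_deriv_smul measurableSet_Ioo hderiv hinj]
    apply setIntegral_congr_fun measurableSet_Ioo
    intro t ht
    simp only [smul_eq_mul]
    exact comp_eq_aux ρ γ α s t hρ hs ht.1 ht.2
  rw [hsub, MeasureTheory.integral_const_mul,
    real_beta_aux (1 - α - γ) γ (by linarith) hγ,
    show (1:ℝ) - α - γ + γ = 1 - α by ring]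
  have hΓγ : Real.Gamma γ ≠ 0 := (Real.Gamma_pos_of_pos hγ).ne'
  have hρpow : ρ ^ (1 - γ) * ρ ^ (γ - 1) = 1 := by
    rw [← Real.rpow_add hρ]
    norm_num
  have hΓα : Real.Gamma (1 - α) ≠ 0 := (Real.Gamma_pos_of_pos (by linarith)).ne'
  rw [show (1:ℝ) - α - γ = 1 - γ - α by ring]
  field_simp
  linear_combination (Real.Gamma (1 - γ - α)) * hρpow
end

section
/- Let ρ > 0, 0 < γ < 1, and λ > 0. Then the right-sided Katugampola fractional derivative of e^{-λτ^ρ} satisfies -s^{1-ρ} (d/ds)[(ρ^{γ}/Γ(1-γ)) ∫_s^∞ τ^{ρ-1} e^{-λτ^ρ} (τ^ρ - s^ρ)^{-γ} dτ] = (λρ)^{γ} e^{-λ s^ρ} for all s > 0. -/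
open Real MeasureTheory

lemma katu_key (ρ γ lam : ℝ) (hρ : 0 < ρ) (hγ0 : 0 < γ) (hγ1 : γ < 1) (hlam : 0 < lam)
    {t : ℝ} (ht : 0 < t) :
    ∫ τ in Set.Ioi t, τ ^ (ρ - 1) * Real.exp (-lam * τ ^ ρ) * (τ ^ ρ - t ^ ρ) ^ (-γ)
      = ρ⁻¹ * (1 / lam) ^ (1 - γ) * Real.Gamma (1 - γ) * Real.exp (-lam * t ^ ρ) := by
  set f : ℝ → ℝ := fun τ => τ ^ ρ - t ^ ρ with hf
  have himg : f '' Set.Ioi t = Set.Ioi (0 : ℝ) := by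
    ext v
    constructor
    · rintro ⟨τ, hτ, rfl⟩
      have : t ^ ρ < τ ^ ρ := Real.rpow_lt_rpow ht.le hτ hρ
      simpa [f] using sub_pos.mpr this
    · intro hv
      refine ⟨(v + t ^ ρ) ^ ρ⁻¹, ?_, ?_⟩
      · have h1 : t ^ ρ < v + t ^ ρ := by linarith [Set.mem_Ioi.mp hv]
        have := Real.rpow_lt_rpow (Real.rpow_nonneg ht.le ρ) h1 (inv_pos.mpr hρ)
        rwa [← Real.rpow_mul ht.le, mul_inv_cancel₀ hρ.ne', Real.rpow_one] at this
      · have hv0 : 0 < v := hv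
        have htρ : 0 ≤ t ^ ρ := Real.rpow_nonneg ht.le ρ
        have hnn : 0 ≤ v + t ^ ρ := by linarith
        simp only [f]
        rw [← Real.rpow_mul hnn, inv_mul_cancel₀ hρ.ne', Real.rpow_one]
        ring
  have hderiv : ∀ x ∈ Set.Ioi t, HasDerivWithinAt f (ρ * x ^ (ρ - 1)) (Set.Ioi t) x := by
    intro x hx
    have hx0 : x ≠ 0 := (ht.trans hx).ne'
    exact ((Real.hasDerivAt_rpow_const (Or.inl hx0)).sub_const _).hasDerivWithinAt
  have hinj : Set.InjOn f (Set.Ioi t) := by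
    intro a ha b hb hab
    have : a ^ ρ = b ^ ρ := by
      have h := hab
      simp only [f, sub_left_inj] at h
      exact h
    exact Real.rpow_left_injOn hρ.ne' (le_of_lt (ht.trans ha)) (le_of_lt (ht.trans hb)) this
  have hchg := integral_image_eq_integral_abs_deriv_smul measurableSet_Ioi hderiv hinj
    (fun v => Real.exp (-lam * (v + t ^ ρ)) * v ^ (-γ))
  rw [himg] at hchg
  have hR : (∫ x in Set.Ioi t, |ρ * x ^ (ρ - 1)| •
      (Real.exp (-lam * (f x + t ^ ρ)) * (f x) ^ (-γ)))
      = ρ * ∫ τ in Set.Ioi t, τ ^ (ρ - 1) * Real.exp (-lam * τ ^ ρ) * (τ ^ ρ - t ^ ρ) ^ (-γ) := by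
    rw [← integral_const_mul]
    refine setIntegral_congr_fun measurableSet_Ioi (fun x hx => ?_)
    have hx0 : 0 < x := ht.trans hx
    have habs : |ρ * x ^ (ρ - 1)| = ρ * x ^ (ρ - 1) := by
      rw [abs_of_nonneg]; positivity
    simp only [f, smul_eq_mul, habs, sub_add_cancel]
    ring
  have hL : (∫ v in Set.Ioi (0:ℝ), Real.exp (-lam * (v + t ^ ρ)) * v ^ (-γ))
      = Real.exp (-lam * t ^ ρ) * ((1 / lam) ^ (1 - γ) * Real.Gamma (1 - γ)) := by
    rw [← Real.integral_rpow_mul_exp_neg_mul_Ioi (by linarith : (0:ℝ) < 1 - γ) hlam,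
      ← integral_const_mul]
    refine setIntegral_congr_fun measurableSet_Ioi (fun v hv => ?_)
    rw [show (1 : ℝ) - γ - 1 = -γ by ring]
    rw [show -lam * (v + t ^ ρ) = (-lam * t ^ ρ) + (-(lam * v)) by ring, Real.exp_add]
    ring
  rw [hL] at hchg
  rw [hR] at hchg
  have := hchg.symm
  field_simp at this ⊢
  linarith [this]

theorem katugampola_derivative_exp_right
    (ρ γ lam : ℝ) (hρ : 0 < ρ) (hγ0 : 0 < γ) (hγ1 : γ < 1) (hlam : 0 < lam) :
    ∀ s > (0:ℝ),
      -(s ^ (1 - ρ)) *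
        deriv (fun t : ℝ =>
          (ρ ^ γ / Real.Gamma (1 - γ)) *
            ∫ τ in Set.Ioi t, τ ^ (ρ - 1) * Real.exp (-lam * τ ^ ρ) * (τ ^ ρ - t ^ ρ) ^ (-γ)) s =
      (lam * ρ) ^ γ * Real.exp (-lam * s ^ ρ) := by
  intro s hs
  have hΓ : 0 < Real.Gamma (1 - γ) := Real.Gamma_pos_of_pos (by linarith)
  set C : ℝ := (lam * ρ) ^ (γ - 1) with hC
  have heq : ∀ᶠ t in nhds s, (fun t : ℝ =>
      (ρ ^ γ / Real.Gamma (1 - γ)) *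
        ∫ τ in Set.Ioi t, τ ^ (ρ - 1) * Real.exp (-lam * τ ^ ρ) * (τ ^ ρ - t ^ ρ) ^ (-γ)) t
      = C * Real.exp (-lam * t ^ ρ) := by
    filter_upwards [eventually_gt_nhds hs] with t ht
    rw [katu_key ρ γ lam hρ hγ0 hγ1 hlam ht]
    have h1 : (1 / lam) ^ (1 - γ) = lam ^ (γ - 1) := by
      rw [one_div, Real.inv_rpow hlam.le, ← Real.rpow_neg hlam.le,
        show -(1 - γ) = γ - 1 by ring]
    have h2 : ρ ^ γ * ρ⁻¹ = ρ ^ (γ - 1) := by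
      rw [Real.rpow_sub hρ, Real.rpow_one, div_eq_mul_inv]
    have hCval : C = lam ^ (γ - 1) * ρ ^ (γ - 1) := by
      rw [hC, Real.mul_rpow hlam.le hρ.le]
    rw [h1, hCval]
    calc ρ ^ γ / Real.Gamma (1 - γ) *
          (ρ⁻¹ * lam ^ (γ - 1) * Real.Gamma (1 - γ) * Real.exp (-lam * t ^ ρ))
        = (ρ ^ γ * ρ⁻¹) * lam ^ (γ - 1) * Real.exp (-lam * t ^ ρ) := by
          field_simp
      _ = lam ^ (γ - 1) * ρ ^ (γ - 1) * Real.exp (-lam * t ^ ρ) := by rw [h2]; ring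
  rw [Filter.EventuallyEq.deriv_eq heq]
  have hd : HasDerivAt (fun t : ℝ => C * Real.exp (-lam * t ^ ρ))
      (C * (Real.exp (-lam * s ^ ρ) * (-lam * (ρ * s ^ (ρ - 1))))) s := by
    have h1 : HasDerivAt (fun t : ℝ => t ^ ρ) (ρ * s ^ (ρ - 1)) s :=
      Real.hasDerivAt_rpow_const (Or.inl hs.ne')
    have h2 := ((h1.const_mul (-lam)).exp).const_mul C
    exact h2
  rw [hd.deriv]
  have hss : s ^ (1 - ρ) * s ^ (ρ - 1) = 1 := by
    rw [← Real.rpow_add hs]; norm_num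
  have hCmul : C * (lam * ρ) = (lam * ρ) ^ γ := by
    rw [hC, ← Real.rpow_add_one (by positivity : lam * ρ ≠ 0)]
    norm_num
  calc -(s ^ (1 - ρ)) * (C * (Real.exp (-lam * s ^ ρ) * (-lam * (ρ * s ^ (ρ - 1)))))
      = (s ^ (1 - ρ) * s ^ (ρ - 1)) * (C * (lam * ρ)) * Real.exp (-lam * s ^ ρ) := by ring
    _ = (lam * ρ) ^ γ * Real.exp (-lam * s ^ ρ) := by rw [hss, hCmul]; ring
end
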